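/- Let d, t ∈ ℕ with d ≥ 4 and 1 ≤ t ≤ √d. Then t²/(2d) ≤ (|B_t ∩ ℤ^d| − |S_t|)/|S_t| ≤ e · t²/d, where e is Euler's number. -/

import Mathlib

/-!
A lattice point of `B_t` with `k` nonzero coordinates is a choice of support (`C(d, k)` ways), of
signs (`2^k`) and of positive magnitudes with sum at most `t` (`C(t, k)`, stars and bars). Hence
`|B_t ∩ ℤ^d| = ∑_{k ≤ t} a_k` with `a_k = C(d, k) 2^k C(t, k)`, and `|S_t| = a_t`.
Since `a_{k+1} (k+1)² = 2 (d-k)(t-k) a_k`, the terms at least double up to `k = t - 1` when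
`t² ≤ d`, so `a_{t-1} ≤ ∑_{k<t} a_k ≤ 2 a_{t-1}`, while `t² a_t = 2 (d-t+1) a_{t-1}`. Together
`t²/(2d) ≤ ∑_{k<t} a_k / a_t ≤ 2t²/d ≤ e t²/d`.
-/

open Finset

noncomputable section

/-- The lattice points of the closed `l¹` ball of radius `t` in `ℤ^d`. -/
def latticeBall (d t : ℕ) : Finset (Fin d → ℤ) :=
  (Finset.Icc (fun _ => -(t : ℤ)) (fun _ => (t : ℤ))).filter fun y => ∑ i, |y i| ≤ (t : ℤ)

/-- `S_t = {x ∈ {-1,0,1}^d : Σ |x_i| = t}`. -/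
def sphereS (d t : ℕ) : Finset (Fin d → ℤ) :=
  (Finset.Icc (fun _ => (-1 : ℤ)) (fun _ => (1 : ℤ))).filter fun y => ∑ i, |y i| = (t : ℤ)

def natBall (ι : Type*) [Fintype ι] [DecidableEq ι] (N : ℕ) : Finset (ι → ℕ) :=
  {m ∈ Fintype.piFinset fun _ => range (N + 1) | ∑ i, m i ≤ N}

def supp {ι : Type*} [Fintype ι] (m : ι → ℕ) : Finset ι := {i | m i ≠ 0}

/-- `∑ k ∈ range (t + 1), delannoyTerm d t k` is the Delannoy number `D(d, t)`. -/
def delannoyTerm (d t k : ℕ) : ℕ := d.choose k * 2 ^ k * t.choose k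

section

variable {ι : Type*} [Fintype ι]

@[simp] lemma mem_supp {m : ι → ℕ} {i : ι} : i ∈ supp m ↔ m i ≠ 0 := by simp [supp]

@[simp] lemma mem_natBall [DecidableEq ι] {N : ℕ} {m : ι → ℕ} :
    m ∈ natBall ι N ↔ ∑ i, m i ≤ N := by
  simp only [natBall, mem_filter, Fintype.mem_piFinset, mem_range, and_iff_right_iff_imp]
  exact fun h i => Nat.lt_succ_of_le <|
    (single_le_sum (fun j _ => Nat.zero_le (m j)) (mem_univ i)).trans h

lemma card_supp_eq_sum_min (m : ι → ℕ) : #(supp m) = ∑ i, min (m i) 1 := by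
  rw [supp, card_filter]
  exact sum_congr rfl fun i _ => by split_ifs <;> omega

lemma card_supp_le_sum (m : ι → ℕ) : #(supp m) ≤ ∑ i, m i := by
  rw [card_supp_eq_sum_min]
  exact sum_le_sum fun i _ => min_le_left _ _

lemma sum_eq_card_supp_iff {m : ι → ℕ} : ∑ i, m i = #(supp m) ↔ ∀ i, m i ≤ 1 := by
  rw [card_supp_eq_sum_min, eq_comm, sum_eq_sum_iff_of_le fun i _ => min_le_left _ _]
  simp

lemma forall_le_one_and_sum_eq_iff {m : ι → ℕ} {t : ℕ} :
    ((∀ i, m i ≤ 1) ∧ ∑ i, m i = t) ↔ ∑ i, m i ≤ t ∧ #(supp m) = t := by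
  rw [← sum_eq_card_supp_iff]
  have := card_supp_le_sum m
  omega

lemma sum_eq_sum_supp_sub_one_add_card (m : ι → ℕ) :
    ∑ i, m i = ∑ i : supp m, (m i - 1) + #(supp m) := by
  rw [← sum_filter_ne_zero, ← supp, card_eq_sum_ones, ← sum_coe_sort, ← sum_coe_sort (supp m),
    ← sum_add_distrib]
  exact sum_congr rfl fun i _ => by have := mem_supp.1 i.2; omega

/-- Stars and bars, with the extra coordinate `none` taking up the slack `N - ∑ i, m i`. -/
lemma card_natBall [DecidableEq ι] (N : ℕ) :
    #(natBall ι N) = (N + Fintype.card ι).choose (Fintype.card ι) := by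
  have h : #(natBall ι N) = #(piAntidiag (univ : Finset (Option ι)) N) := by
    refine card_nbij' (fun m o => o.elim (N - ∑ i, m i) m) (fun m i => m (some i)) ?_ ?_ ?_ ?_
    · intro m hm
      rw [mem_coe, mem_natBall] at hm
      simp [Fintype.sum_option, hm]
    · intro m hm
      simp only [mem_coe, mem_piAntidiag, Fintype.sum_option] at hm
      simp only [mem_coe, mem_natBall]
      omega
    · intro m hm
      rfl
    · intro m hm
      simp only [mem_coe, mem_piAntidiag, Fintype.sum_option] at hm
      funext o
      cases o
      · simp only [Option.elim_none]
        omega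
      · rfl
  rw [h, ← map_sym_eq_piAntidiag, card_map, sym_univ, card_univ, Sym.card_sym_eq_choose,
    Fintype.card_option, show Fintype.card ι + 1 + N - 1 = N + Fintype.card ι by omega,
    Nat.choose_symm_add]

lemma card_natBall_filter_supp_eq [DecidableEq ι] {t : ℕ} (s : Finset ι) (hs : #s ≤ t) :
    #{m ∈ natBall ι t | supp m = s} = t.choose #s := by
  have hsum : ∀ m : ι → ℕ, supp m = s → ∑ i, m i = ∑ i : s, (m i - 1) + #s := by
    rintro m rfl
    exact sum_eq_sum_supp_sub_one_add_card m
  let extend (g : s → ℕ) (i : ι) : ℕ := if h : i ∈ s then g ⟨i, h⟩ + 1 else 0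
  have supp_extend (g : s → ℕ) : supp (extend g) = s := by
    ext i
    by_cases h : i ∈ s <;> simp [extend, h]
  have h : #{m ∈ natBall ι t | supp m = s} = #(natBall s (t - #s)) := by
    refine card_nbij' (fun m i => m i - 1) extend ?_ ?_ ?_ ?_
    · intro m hm
      simp only [coe_filter, mem_natBall, Set.mem_ofPred_eq] at hm
      simp only [mem_coe, mem_natBall]
      have := hsum m hm.2
      omega
    · intro g hg
      simp only [mem_coe, mem_natBall] at hg
      simp only [coe_filter, mem_natBall, Set.mem_ofPred_eq, supp_extend, and_true]
      rw [hsum _ (supp_extend g)]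
      simpa [extend] using Nat.add_le_of_le_sub hs hg
    · intro m hm
      simp only [coe_filter, Set.mem_ofPred_eq] at hm
      funext i
      by_cases h : i ∈ s
      · have := mem_supp.1 (hm.2 ▸ h)
        simp only [extend, dif_pos h]
        omega
      · have : m i = 0 := by simpa [← hm.2] using h
        simp only [extend, dif_neg h, this]
    · intro g _
      funext i
      simp [extend]
  rw [h, card_natBall, Fintype.card_coe, Nat.sub_add_cancel hs]

lemma card_natBall_filter_card_supp_eq [DecidableEq ι] {k t : ℕ} (hk : k ≤ t) :
    #{m ∈ natBall ι t | #(supp m) = k} = (Fintype.card ι).choose k * t.choose k := by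
  rw [card_eq_sum_card_fiberwise (f := supp) (t := powersetCard k univ)
    fun m hm => mem_powersetCard.2 ⟨subset_univ _, (mem_filter.1 hm).2⟩]
  have hfiber : ∀ s ∈ powersetCard k univ,
      #{m ∈ {m ∈ natBall ι t | #(supp m) = k} | supp m = s} = t.choose k := by
    intro s hs
    have hsk := (mem_powersetCard.1 hs).2
    rw [filter_filter, ← hsk, ← card_natBall_filter_supp_eq s (hsk ▸ hk)]
    congr 1
    exact filter_congr fun m _ => ⟨And.right, fun h => ⟨h ▸ rfl, h⟩⟩
  rw [sum_congr rfl hfiber, sum_const, card_powersetCard, card_univ, smul_eq_mul]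

lemma sum_natBall_filter_card_supp_eq [DecidableEq ι] {k t : ℕ} (hk : k ≤ t) :
    ∑ m ∈ natBall ι t with #(supp m) = k, 2 ^ #(supp m) = delannoyTerm (Fintype.card ι) t k := by
  rw [sum_congr rfl fun m hm => by rw [(mem_filter.1 hm).2], sum_const, smul_eq_mul,
    card_natBall_filter_card_supp_eq hk, delannoyTerm]
  ring

lemma card_pair_natCast_neg (n : ℕ) :
    #({(n : ℤ), -(n : ℤ)} : Finset ℤ) = if n ≠ 0 then 2 else 1 := by
  split_ifs with h
  · exact card_pair (by omega)
  · simp [not_not.mp h]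

lemma sum_abs_eq_natCast_sum_natAbs (x : ι → ℤ) :
    ∑ i, |x i| = ((∑ i, (x i).natAbs : ℕ) : ℤ) := by
  push_cast [Int.natCast_natAbs]
  rfl

/-- The fibre of `x ↦ (|x i|)ᵢ` over `m` is the box `∏ᵢ {m i, -m i}`: one sign per nonzero
coordinate. -/
lemma card_eq_sum_two_pow_card_supp [DecidableEq ι] {A : Finset (ι → ℤ)} {M : Finset (ι → ℕ)}
    (hA : ∀ x, x ∈ A ↔ (fun i => (x i).natAbs) ∈ M) :
    #A = ∑ m ∈ M, 2 ^ #(supp m) := by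
  rw [card_eq_sum_card_fiberwise fun x hx => (hA x).1 hx]
  refine sum_congr rfl fun m hm => ?_
  have hfiber : {x ∈ A | (fun i => (x i).natAbs) = m} =
      Fintype.piFinset fun i => ({(m i : ℤ), -(m i : ℤ)} : Finset ℤ) := by
    ext x
    simp only [mem_filter, hA, Fintype.mem_piFinset, mem_insert, mem_singleton, ← Int.natAbs_eq_iff]
    constructor
    · rintro ⟨-, rfl⟩ i; rfl
    · intro h
      obtain rfl : (fun i => (x i).natAbs) = m := funext h
      exact ⟨hm, rfl⟩
  rw [hfiber, Fintype.card_piFinset, supp, ← prod_const, prod_filter]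
  exact prod_congr rfl fun i _ => card_pair_natCast_neg (m i)

end

lemma mem_latticeBall {d t : ℕ} {x : Fin d → ℤ} :
    x ∈ latticeBall d t ↔ ∑ i, |x i| ≤ t := by
  refine ⟨fun h => (mem_filter.1 h).2, fun h => mem_filter.2 ⟨?_, h⟩⟩
  have habs : ∀ i, |x i| ≤ t := fun i =>
    (single_le_sum (fun j _ => abs_nonneg (x j)) (mem_univ i)).trans h
  exact mem_Icc.2 ⟨fun i => (abs_le.1 (habs i)).1, fun i => (abs_le.1 (habs i)).2⟩

lemma mem_sphereS {d t : ℕ} {x : Fin d → ℤ} :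
    x ∈ sphereS d t ↔ (∀ i, |x i| ≤ 1) ∧ ∑ i, |x i| = t := by
  simp only [sphereS, mem_filter, mem_Icc, abs_le, Pi.le_def, forall_and]

lemma mem_latticeBall_iff_natAbs {d t : ℕ} {x : Fin d → ℤ} :
    x ∈ latticeBall d t ↔ (fun i => (x i).natAbs) ∈ natBall (Fin d) t := by
  rw [mem_latticeBall, mem_natBall, sum_abs_eq_natCast_sum_natAbs]
  exact_mod_cast Iff.rfl

lemma mem_sphereS_iff_natAbs {d t : ℕ} {x : Fin d → ℤ} :
    x ∈ sphereS d t ↔ (fun i => (x i).natAbs) ∈ {m ∈ natBall (Fin d) t | #(supp m) = t} := by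
  rw [mem_sphereS, mem_filter, mem_natBall, ← forall_le_one_and_sum_eq_iff,
    sum_abs_eq_natCast_sum_natAbs, Nat.cast_inj]
  simp only [← Int.natCast_natAbs]
  exact_mod_cast Iff.rfl

lemma card_latticeBall (d t : ℕ) :
    #(latticeBall d t) = ∑ k ∈ range (t + 1), delannoyTerm d t k := by
  rw [card_eq_sum_two_pow_card_supp fun x => mem_latticeBall_iff_natAbs,
    ← sum_fiberwise_of_maps_to (g := fun m => #(supp m)) (t := range (t + 1))]
  · refine sum_congr rfl fun k hk => ?_
    rw [sum_natBall_filter_card_supp_eq (Nat.lt_succ_iff.1 (mem_range.1 hk)), Fintype.card_fin]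
  · exact fun m hm => mem_range.2 <| Nat.lt_succ_of_le <|
      (card_supp_le_sum m).trans (mem_natBall.1 hm)

lemma card_sphereS (d t : ℕ) : #(sphereS d t) = delannoyTerm d t t := by
  rw [card_eq_sum_two_pow_card_supp fun x => mem_sphereS_iff_natAbs,
    sum_natBall_filter_card_supp_eq le_rfl, Fintype.card_fin]

lemma sum_range_succ_le_two_mul_of_doubling {R : Type*} [Semiring R] [PartialOrder R]
    [IsOrderedRing R] {a : ℕ → R} {n : ℕ} (h0 : 0 ≤ a 0) (h : ∀ k < n, 2 * a k ≤ a (k + 1)) :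
    ∑ k ∈ range (n + 1), a k ≤ 2 * a n := by
  induction n with
  | zero => simpa [two_mul] using le_add_of_nonneg_left h0
  | succ n ih =>
    calc ∑ k ∈ range (n + 2), a k ≤ 2 * a n + a (n + 1) := by
          rw [sum_range_succ]
          exact add_le_add_left (ih fun k hk => h k (by omega)) _
      _ ≤ 2 * a (n + 1) := by
          rw [two_mul (a (n + 1))]
          exact add_le_add_left (h n n.lt_succ_self) _

lemma delannoyTerm_succ_mul_sq (d t k : ℕ) :
    delannoyTerm d t (k + 1) * (k + 1) ^ 2 = 2 * (d - k) * (t - k) * delannoyTerm d t k := by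
  calc delannoyTerm d t (k + 1) * (k + 1) ^ 2
      = d.choose (k + 1) * (k + 1) * (t.choose (k + 1) * (k + 1)) * 2 ^ (k + 1) := by
        rw [delannoyTerm]; ring
    _ = 2 * (d - k) * (t - k) * delannoyTerm d t k := by
        rw [Nat.choose_succ_right_eq, Nat.choose_succ_right_eq, delannoyTerm]; ring

lemma two_mul_delannoyTerm_le_succ {d t k : ℕ} (hk : k + 2 ≤ t) (ht : t ^ 2 ≤ d) :
    2 * delannoyTerm d t k ≤ delannoyTerm d t (k + 1) := by
  have hquad : (k + 1) ^ 2 ≤ (d - k) * (t - k) := by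
    zify [(by nlinarith : k ≤ d), (by omega : k ≤ t)]
    have : ((t : ℤ)) ^ 2 ≤ d := by exact_mod_cast ht
    nlinarith
  refine Nat.le_of_mul_le_mul_right ?_ (by positivity : 0 < (k + 1) ^ 2)
  rw [delannoyTerm_succ_mul_sq]
  calc 2 * delannoyTerm d t k * (k + 1) ^ 2 ≤ 2 * delannoyTerm d t k * ((d - k) * (t - k)) :=
        Nat.mul_le_mul_left _ hquad
    _ = 2 * (d - k) * (t - k) * delannoyTerm d t k := by ring

lemma sq_mul_delannoyTerm_self {d t : ℕ} (ht : 1 ≤ t) :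
    t ^ 2 * delannoyTerm d t t = 2 * (d + 1 - t) * delannoyTerm d t (t - 1) := by
  obtain ⟨k, rfl⟩ := Nat.exists_eq_add_of_le' ht
  rw [mul_comm, delannoyTerm_succ_mul_sq, Nat.add_sub_cancel, Nat.add_sub_cancel_left,
    show d + 1 - (k + 1) = d - k by omega, mul_one]

lemma sq_mul_delannoyTerm_self_le_two_mul_sum {d t : ℕ} (ht : 1 ≤ t) :
    t ^ 2 * delannoyTerm d t t ≤ 2 * d * ∑ k ∈ range t, delannoyTerm d t k := by
  rw [sq_mul_delannoyTerm_self ht]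
  gcongr
  · omega
  · exact single_le_sum (fun k _ => Nat.zero_le _) (mem_range.2 (by omega))

lemma mul_sum_delannoyTerm_le_two_mul_sq_mul {d t : ℕ} (ht : 1 ≤ t) (htd : t ^ 2 ≤ d) :
    d * ∑ k ∈ range t, delannoyTerm d t k ≤ 2 * t ^ 2 * delannoyTerm d t t := by
  have hsum : ∑ k ∈ range t, delannoyTerm d t k ≤ 2 * delannoyTerm d t (t - 1) := by
    rw [← Nat.sub_add_cancel ht]
    exact sum_range_succ_le_two_mul_of_doubling (Nat.zero_le _) fun k hk =>
      two_mul_delannoyTerm_le_succ (by omega) (by rwa [Nat.sub_add_cancel ht])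
  have hd : d ≤ 2 * (d + 1 - t) := by
    have : 2 * t ≤ d + 1 := by
      zify at htd ⊢
      nlinarith [sq_nonneg ((t : ℤ) - 1)]
    omega
  calc d * ∑ k ∈ range t, delannoyTerm d t k ≤ 2 * (d + 1 - t) * (2 * delannoyTerm d t (t - 1)) :=
        Nat.mul_le_mul hd hsum
    _ = 2 * (t ^ 2 * delannoyTerm d t t) := by rw [sq_mul_delannoyTerm_self ht]; ring
    _ = 2 * t ^ 2 * delannoyTerm d t t := (mul_assoc _ _ _).symm

theorem latticeBall_sphereS_ratio_general (d t : ℕ) (ht : 1 ≤ t)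
    (htd : (t : ℝ) ≤ Real.sqrt d) :
    (t : ℝ) ^ 2 / (2 * d) ≤
        (((latticeBall d t).card : ℝ) - (sphereS d t).card) / (sphereS d t).card ∧
      (((latticeBall d t).card : ℝ) - (sphereS d t).card) / (sphereS d t).card ≤
        Real.exp 1 * (t : ℝ) ^ 2 / d := by
  have hsq : t ^ 2 ≤ d := by
    exact_mod_cast (Real.le_sqrt (by positivity) (by positivity)).1 htd
  have hd : (0 : ℝ) < d := by norm_cast; nlinarith
  have hS : (0 : ℝ) < delannoyTerm d t t := by
    norm_cast
    exact Nat.mul_pos (Nat.mul_pos (Nat.choose_pos (by nlinarith)) (by positivity))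
      (Nat.choose_pos le_rfl)
  have hlower : (t : ℝ) ^ 2 * delannoyTerm d t t ≤ 2 * d * ∑ k ∈ range t, delannoyTerm d t k := by
    exact_mod_cast sq_mul_delannoyTerm_self_le_two_mul_sum ht
  have hupper : (d : ℝ) * ∑ k ∈ range t, delannoyTerm d t k ≤ 2 * t ^ 2 * delannoyTerm d t t := by
    exact_mod_cast mul_sum_delannoyTerm_le_two_mul_sq_mul ht hsq
  have he : (2 : ℝ) ≤ Real.exp 1 := by linarith [Real.add_one_le_exp 1]
  rw [card_latticeBall, card_sphereS, sum_range_succ, Nat.cast_add, add_sub_cancel_right]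
  constructor
  · rw [div_le_div_iff₀ (by positivity) hS]
    linarith
  · rw [div_le_div_iff₀ hS hd]
    nlinarith

/-- Lemma 2.4: for `d ≥ 4` and `1 ≤ t ≤ √d`,
`t²/(2d) ≤ (|B_t ∩ ℤ^d| - |S_t|)/|S_t| ≤ e · t²/d`. -/
theorem latticeBall_sphereS_ratio (d t : ℕ) (hd : 4 ≤ d) (ht : 1 ≤ t)
    (htd : (t : ℝ) ≤ Real.sqrt d) :
    (t : ℝ) ^ 2 / (2 * d) ≤
        (((latticeBall d t).card : ℝ) - (sphereS d t).card) / (sphereS d t).card ∧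
      (((latticeBall d t).card : ℝ) - (sphereS d t).card) / (sphereS d t).card ≤
        Real.exp 1 * (t : ℝ) ^ 2 / d :=
  latticeBall_sphereS_ratio_general d t ht htd
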